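/- Let Q : ℝ^d → ℝ be convex and H = D + u·uᵀ be positive definite, where D is diagonal with positive entries. Then prox_Q^H(x) = D^{-1/2}·prox_{Q∘D^{-1/2}}(D^{1/2}x − v), where v = β₀·D^{-1/2}u and β₀ ∈ ℝ satisfies uᵀ(x − D^{-1/2} prox_{Q∘D^{-1/2}}(D^{1/2}(x − β₀D^{-1}u))) + β₀ = 0. -/

import Mathlib

/-!
Write `F z = Q z + ½ (z - x)ᵀ H (z - x)` and `w = D^{1/2} x - β₀ D^{-1/2} u`. Expanding,
`½ ‖D^{1/2} z - w‖² = ½ (z - x)ᵀ H (z - x) - ½ (uᵀ(z - x) - β₀)² + const`, so the scaled prox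
`q = D^{-1/2} prox_{Q∘D^{-1/2}}(w)` minimizes `F` minus a nonnegative penalty. The scalar equation
says exactly that `uᵀ(q - x) = β₀`, i.e. the penalty vanishes at `q`, so `q` minimizes `F` as well.
Since `H` is positive definite, `F` is strictly convex and its minimizer `p1` is unique.
-/

open Matrix

lemma StrictConvexOn.const_mul {E : Type*} [AddCommMonoid E] [SMul ℝ E] {s : Set E} {f : E → ℝ}
    (hf : StrictConvexOn ℝ s f) {c : ℝ} (hc : 0 < c) : StrictConvexOn ℝ s fun z => c * f z := by
  refine ⟨hf.1, fun x hx y hy hxy a b ha hb hab => ?_⟩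
  have h := mul_lt_mul_of_pos_left (hf.2 hx hy hxy ha hb hab) hc
  simp only [smul_eq_mul] at h ⊢
  linarith

section QuadraticForm

variable {ι : Type*} [Fintype ι] {H : Matrix ι ι ℝ}

lemma Matrix.IsSymm.dotProduct_mulVec_comm (hH : H.IsSymm) (a b : ι → ℝ) :
    b ⬝ᵥ (H *ᵥ a) = a ⬝ᵥ (H *ᵥ b) := by
  rw [dotProduct_mulVec, ← mulVec_transpose, hH.eq, dotProduct_comm]

lemma Matrix.IsSymm.dotProduct_mulVec_add_smul (hH : H.IsSymm) (a b : ι → ℝ) {t s : ℝ}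
    (hts : t + s = 1) :
    (t • a + s • b) ⬝ᵥ (H *ᵥ (t • a + s • b)) =
      t * (a ⬝ᵥ (H *ᵥ a)) + s * (b ⬝ᵥ (H *ᵥ b)) - t * s * ((a - b) ⬝ᵥ (H *ᵥ (a - b))) := by
  obtain rfl : s = 1 - t := by linarith
  simp only [mulVec_add, mulVec_smul, mulVec_sub, dotProduct_add, add_dotProduct,
    dotProduct_smul, smul_dotProduct, dotProduct_sub, sub_dotProduct, smul_eq_mul,
    hH.dotProduct_mulVec_comm a b]
  ring

lemma Matrix.PosDef.strictConvexOn_dotProduct_mulVec_sub (hH : H.PosDef) (x : ι → ℝ) :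
    StrictConvexOn ℝ Set.univ fun z => (z - x) ⬝ᵥ (H *ᵥ (z - x)) := by
  refine ⟨convex_univ, fun a _ b _ hab t s ht hs hts => ?_⟩
  have hshift : t • a + s • b - x = t • (a - x) + s • (b - x) := by
    obtain rfl : s = 1 - t := by linarith
    module
  have hpos : 0 < (a - b) ⬝ᵥ (H *ᵥ (a - b)) := by
    simpa only [star_trivial] using hH.dotProduct_mulVec_pos (sub_ne_zero.2 hab)
  have hts_pos : 0 < t * s * ((a - b) ⬝ᵥ (H *ᵥ (a - b))) := by positivity
  simp only [smul_eq_mul]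
  rw [hshift, (isHermitian_iff_isSymm.1 hH.isHermitian).dotProduct_mulVec_add_smul _ _ hts,
    sub_sub_sub_cancel_right]
  linarith

end QuadraticForm

section DiagonalScaling

variable {ι : Type*} [Fintype ι] [DecidableEq ι]

lemma diagonal_mulVec_diagonal_inv_mulVec {f : ι → ℝ} (hf : ∀ i, f i ≠ 0) (z : ι → ℝ) :
    diagonal f *ᵥ (diagonal (fun i => (f i)⁻¹) *ᵥ z) = z := by
  simp [mulVec_mulVec, diagonal_mul_diagonal, hf]

lemma diagonal_inv_mulVec_diagonal_mulVec {f : ι → ℝ} (hf : ∀ i, f i ≠ 0) (z : ι → ℝ) :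
    diagonal (fun i => (f i)⁻¹) *ᵥ (diagonal f *ᵥ z) = z := by
  simp [mulVec_mulVec, diagonal_mul_diagonal, hf]

lemma diagonal_sqrt_mulVec_diagonal_inv_mulVec (dv u : ι → ℝ) :
    diagonal (fun i => √(dv i)) *ᵥ (diagonal (fun i => (dv i)⁻¹) *ᵥ u) =
      diagonal (fun i => (√(dv i))⁻¹) *ᵥ u := by
  simp [mulVec_mulVec, diagonal_mul_diagonal, ← div_eq_mul_inv, Real.sqrt_div_self]

lemma dotProduct_diagonal_add_vecMulVec_mulVec (dv u a : ι → ℝ) :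
    a ⬝ᵥ ((diagonal dv + vecMulVec u u) *ᵥ a) = ∑ i, dv i * a i ^ 2 + (u ⬝ᵥ a) ^ 2 := by
  rw [add_mulVec, dotProduct_add, vecMulVec_mulVec, op_smul_eq_smul, dotProduct_smul,
    smul_eq_mul, dotProduct_comm a u, sq (u ⬝ᵥ a)]
  congr 1
  simp only [dotProduct, mulVec_diagonal]
  exact Finset.sum_congr rfl fun i _ => by ring

lemma dotProduct_self_diagonal_sqrt_mulVec_sub {dv : ι → ℝ} (hdv : ∀ i, 0 < dv i)
    (u x z : ι → ℝ) (β : ℝ) :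
    let r := diagonal (fun i => √(dv i)) *ᵥ z -
      (diagonal (fun i => √(dv i)) *ᵥ x - β • (diagonal (fun i => (√(dv i))⁻¹) *ᵥ u))
    r ⬝ᵥ r = (z - x) ⬝ᵥ ((diagonal dv + vecMulVec u u) *ᵥ (z - x)) - (u ⬝ᵥ (z - x) - β) ^ 2
      + β ^ 2 * (1 + ∑ i, u i ^ 2 / dv i) := by
  intro r
  rw [dotProduct_diagonal_add_vecMulVec_mulVec]
  have hsum : r ⬝ᵥ r = ∑ i, dv i * (z - x) i ^ 2 + 2 * β * (u ⬝ᵥ (z - x))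
      + β ^ 2 * ∑ i, u i ^ 2 / dv i := by
    simp only [r, dotProduct, mulVec_diagonal, Pi.sub_apply, Pi.smul_apply, smul_eq_mul,
      Finset.mul_sum, ← Finset.sum_add_distrib]
    refine Finset.sum_congr rfl fun i _ => ?_
    have hsq : √(dv i) ^ 2 = dv i := Real.sq_sqrt (hdv i).le
    have hne : √(dv i) ≠ 0 := (Real.sqrt_pos.2 (hdv i)).ne'
    generalize √(dv i) = s at hsq hne ⊢
    rw [← hsq]
    field_simp
    ring
  rw [hsum]
  ring

end DiagonalScaling

/-- proximal splitting for H = D + uuᵀ (Lemma 1):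
prox_Q^H(x) = D^{-1/2} prox_{Q∘D^{-1/2}}(D^{1/2}x − β₀ D^{-1/2}u) where β₀
solves the scalar equation. -/
theorem stmt10 {d : ℕ} (Q : (Fin d → ℝ) → ℝ) (hQ : ConvexOn ℝ Set.univ Q)
    (dv : Fin d → ℝ) (hdv : ∀ i, 0 < dv i) (u : Fin d → ℝ)
    (D : Matrix (Fin d) (Fin d) ℝ) (hD : D = Matrix.diagonal dv)
    (H : Matrix (Fin d) (Fin d) ℝ) (hH : H = D + vecMulVec u u)
    (hpd : H.PosDef)
    (Dhalf Dhalfinv Dinv : Matrix (Fin d) (Fin d) ℝ)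
    (hDhalf : Dhalf = Matrix.diagonal fun i => Real.sqrt (dv i))
    (hDhalfinv : Dhalfinv = Matrix.diagonal fun i => (Real.sqrt (dv i))⁻¹)
    (hDinv : Dinv = Matrix.diagonal fun i => (dv i)⁻¹)
    (x : Fin d → ℝ)
    -- p1 = prox_Q^H(x)
    (p1 : Fin d → ℝ)
    (hp1 : ∀ z, Q p1 + (1 / 2) * ((p1 - x) ⬝ᵥ (H *ᵥ (p1 - x)))
        ≤ Q z + (1 / 2) * ((z - x) ⬝ᵥ (H *ᵥ (z - x))))
    -- p2 w = prox_{Q∘D^{-1/2}}(w)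
    (p2 : (Fin d → ℝ) → (Fin d → ℝ))
    (hp2 : ∀ w z, Q (Dhalfinv *ᵥ p2 w) + (1 / 2) * ((p2 w - w) ⬝ᵥ (p2 w - w))
        ≤ Q (Dhalfinv *ᵥ z) + (1 / 2) * ((z - w) ⬝ᵥ (z - w)))
    (β₀ : ℝ)
    (hβ₀ : u ⬝ᵥ (x - Dhalfinv *ᵥ p2 (Dhalf *ᵥ (x - β₀ • (Dinv *ᵥ u)))) + β₀ = 0) :
    p1 = Dhalfinv *ᵥ p2 (Dhalf *ᵥ x - β₀ • (Dhalfinv *ᵥ u)) := by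
  subst hD hH hDhalf hDhalfinv hDinv
  have hsqrt : ∀ i, √(dv i) ≠ 0 := fun i => (Real.sqrt_pos.2 (hdv i)).ne'
  set w := (diagonal fun i => √(dv i)) *ᵥ x - β₀ • (diagonal fun i => (√(dv i))⁻¹) *ᵥ u
  set q := (diagonal fun i => (√(dv i))⁻¹) *ᵥ p2 w
  have hq_u : u ⬝ᵥ (q - x) = β₀ := by
    rw [mulVec_sub, mulVec_smul, diagonal_sqrt_mulVec_diagonal_inv_mulVec] at hβ₀
    rw [dotProduct_sub] at hβ₀ ⊢
    linarith
  have hq_min : IsMinOn (fun z => Q z + 1 / 2 * ((z - x) ⬝ᵥ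
      ((diagonal dv + vecMulVec u u) *ᵥ (z - x)))) Set.univ q := fun z _ => by
    have hpw : p2 w = diagonal (fun i => √(dv i)) *ᵥ q :=
      (diagonal_mulVec_diagonal_inv_mulVec hsqrt _).symm
    have h := hp2 w (diagonal (fun i => √(dv i)) *ᵥ z)
    rw [hpw, diagonal_inv_mulVec_diagonal_mulVec hsqrt, diagonal_inv_mulVec_diagonal_mulVec hsqrt,
      dotProduct_self_diagonal_sqrt_mulVec_sub hdv, dotProduct_self_diagonal_sqrt_mulVec_sub hdv,
      hq_u, sub_self] at h
    show Q q + _ ≤ Q z + _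
    linarith [sq_nonneg (u ⬝ᵥ (z - x) - β₀)]
  have hF := hQ.add_strictConvexOn ((hpd.strictConvexOn_dotProduct_mulVec_sub x).const_mul
    one_half_pos)
  exact hF.eq_of_isMinOn (fun z _ => hp1 z) hq_min trivial trivial
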